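/- Let G be a König-Egerváry graph and let G₀ = G − N[core(G)] be the subgraph of G induced by the vertices lying outside the closed neighborhood of core(G). Then G₀ has a perfect matching and G₀ is also a König-Egerváry graph. -/

import Mathlib

open scoped Classical

namespace KEG

variable {V : Type*}

/-- `S` is a stable (independent) set of vertices of `G`. -/
def IsStable (G : SimpleGraph V) (S : Finset V) : Prop :=
  ∀ ⦃x⦄, x ∈ S → ∀ ⦃y⦄, y ∈ S → ¬G.Adj x y

/-- The stability number `α(G)`: maximum cardinality of a stable set. -/
noncomputable def alphaNum (G : SimpleGraph V) : ℕ :=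
  sSup {n | ∃ S : Finset V, IsStable G S ∧ S.card = n}

/-- `S` is a maximum stable set of `G`. -/
def IsMaxStable (G : SimpleGraph V) (S : Finset V) : Prop :=
  IsStable G S ∧ S.card = alphaNum G

/-- `M` is a matching of `G`: a set of edges of `G`, pairwise non-incident. -/
def IsMatching (G : SimpleGraph V) (M : Finset (Sym2 V)) : Prop :=
  (∀ e ∈ M, e ∈ G.edgeSet) ∧
    ∀ e ∈ M, ∀ f ∈ M, e ≠ f → ∀ v : V, v ∈ e → v ∉ f

/-- The matching number `μ(G)`: maximum cardinality of a matching. -/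
noncomputable def muNum (G : SimpleGraph V) : ℕ :=
  sSup {n | ∃ M : Finset (Sym2 V), IsMatching G M ∧ M.card = n}

/-- A perfect matching: a matching covering every vertex. -/
def IsPerfectMatching (G : SimpleGraph V) (M : Finset (Sym2 V)) : Prop :=
  IsMatching G M ∧ ∀ v : V, ∃ e ∈ M, v ∈ e

/-- A maximal matching: a matching such that no edge of `G` can be added to it
while keeping pairwise non-incidence, i.e. every edge of `G` outside `M` is
incident to an edge of `M`. -/
def IsMaximalMatching (G : SimpleGraph V) (M : Finset (Sym2 V)) : Prop :=
  IsMatching G M ∧ ∀ e ∈ G.edgeSet, e ∉ M → ∃ f ∈ M, ∃ v : V, v ∈ e ∧ v ∈ f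

/-- `G` is a König-Egerváry graph: `α(G) + μ(G) = |V(G)|`. -/
def KonigEgervary (G : SimpleGraph V) [Fintype V] : Prop :=
  alphaNum G + muNum G = Fintype.card V

/-- `e` is an α-critical edge of `G`: `α(G - e) > α(G)`. -/
def IsAlphaCritical (G : SimpleGraph V) (e : Sym2 V) : Prop :=
  e ∈ G.edgeSet ∧ alphaNum G < alphaNum (G.deleteEdges {e})

/-- `e` is a μ-critical edge of `G`: `μ(G - e) < μ(G)`. -/
def IsMuCritical (G : SimpleGraph V) (e : Sym2 V) : Prop :=
  e ∈ G.edgeSet ∧ muNum (G.deleteEdges {e}) < muNum G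

/-- `core(G)`: the set of vertices belonging to every maximum stable set of `G`. -/
def core (G : SimpleGraph V) : Set V :=
  {v | ∀ S : Finset V, IsMaxStable G S → v ∈ S}

/-- `ξ(G) = |core(G)|`. -/
noncomputable def xi (G : SimpleGraph V) : ℕ := (core G).ncard

/-- `σ(G)`: the number of vertices belonging to no maximum stable set of `G`. -/
noncomputable def sigmaNum (G : SimpleGraph V) : ℕ :=
  {v : V | ∀ S : Finset V, IsMaxStable G S → v ∉ S}.ncard

/-- `η(G)`: the number of α-critical edges of `G`. -/
noncomputable def eta (G : SimpleGraph V) : ℕ :=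
  {e : Sym2 V | IsAlphaCritical G e}.ncard

/-- `N(A)`: the set of vertices adjacent to some vertex of `A`. -/
def nbhd (G : SimpleGraph V) (A : Set V) : Set V :=
  {v | ∃ a ∈ A, G.Adj a v}

/-- `N[A] = A ∪ N(A)`: the closed neighborhood of `A`. -/
def closedNbhd (G : SimpleGraph V) (A : Set V) : Set V :=
  A ∪ nbhd G A

/-!
A stable set `S` and a matching `M` with `|S| + |M| ≥ |V|` are rigid: `M` covers every vertex
outside `S`, and no edge of `M` has two endpoints outside `S`. Otherwise some set of fewer than
`|M|` vertices outside `S` would meet every edge of `M`, impossible for disjoint edges.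
In a König-Egerváry graph this applies to every maximum stable set and a maximum matching `M`.
A vertex `v` of `G₀` misses some maximum stable set `T`, so its `M`-partner `w` lies in `T`;
then `w ∉ core(G)` because `v` has no neighbour in the core, and `w` has no neighbour in the core
because `core(G) ⊆ T`. Hence `M` restricts to a perfect matching of `G₀`, and a fixed maximum
stable set of `G`, restricted to `G₀`, meets every edge of it, which makes `G₀` König-Egerváry.
-/

section Bounds

variable {U : Type*} [Fintype U] (H : SimpleGraph U)

lemma bddAbove_stable_card :
    BddAbove {n | ∃ S : Finset U, IsStable H S ∧ S.card = n} :=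
  ⟨Fintype.card U, by rintro _ ⟨S, -, rfl⟩; exact S.card_le_univ⟩

lemma bddAbove_matching_card :
    BddAbove {n | ∃ M : Finset (Sym2 U), IsMatching H M ∧ M.card = n} :=
  ⟨Fintype.card (Sym2 U), by rintro _ ⟨M, -, rfl⟩; exact M.card_le_univ⟩

lemma exists_isMaxStable : ∃ S : Finset U, IsMaxStable H S :=
  Nat.sSup_mem (s := {n | ∃ S : Finset U, IsStable H S ∧ S.card = n})
    ⟨0, ∅, fun _ h => absurd h (Finset.notMem_empty _), rfl⟩ (bddAbove_stable_card H)

lemma exists_isMatching_card_eq_muNum :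
    ∃ M : Finset (Sym2 U), IsMatching H M ∧ M.card = muNum H :=
  Nat.sSup_mem (s := {n | ∃ M : Finset (Sym2 U), IsMatching H M ∧ M.card = n})
    ⟨0, ∅, ⟨by simp, by simp⟩, rfl⟩ (bddAbove_matching_card H)

variable {H}

lemma IsStable.card_le_alphaNum {S : Finset U} (hS : IsStable H S) : S.card ≤ alphaNum H :=
  le_csSup (bddAbove_stable_card H) ⟨S, hS, rfl⟩

lemma IsMatching.card_le_muNum {M : Finset (Sym2 U)} (hM : IsMatching H M) :
    M.card ≤ muNum H :=
  le_csSup (bddAbove_matching_card H) ⟨M, hM, rfl⟩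

end Bounds

section Matching

variable {U : Type*} {H : SimpleGraph U} {M : Finset (Sym2 U)} {S : Finset U}

lemma IsMatching.eq_of_mem_of_mem (hM : IsMatching H M) {e f : Sym2 U} (he : e ∈ M)
    (hf : f ∈ M) {v : U} (hve : v ∈ e) (hvf : v ∈ f) : e = f := by
  by_contra hef
  exact hM.2 e he f hf hef v hve hvf

lemma IsStable.exists_mem_notMem (hS : IsStable H S) {e : Sym2 U} (he : e ∈ H.edgeSet) :
    ∃ v ∈ e, v ∉ S := by
  induction e using Sym2.ind with
  | _ x y =>
    by_contra! h
    exact hS (h x (Sym2.mem_mk_left x y)) (h y (Sym2.mem_mk_right x y)) he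

lemma IsMatching.card_le_card_of_forall_exists_mem (hM : IsMatching H M) {t : Finset U}
    (h : ∀ e ∈ M, ∃ v ∈ t, v ∈ e) : M.card ≤ t.card :=
  Finset.card_le_card_of_forall_subsingleton (fun e v => v ∈ e) h
    fun _ _ _ he _ hf => hM.eq_of_mem_of_mem he.1 hf.1 he.2 hf.2

variable [Fintype U]

lemma IsStable.card_add_card_le (hS : IsStable H S) (hM : IsMatching H M) :
    S.card + M.card ≤ Fintype.card U := by
  have h : M.card ≤ Sᶜ.card := hM.card_le_card_of_forall_exists_mem fun e he => by
    obtain ⟨v, hve, hvS⟩ := hS.exists_mem_notMem (hM.1 e he)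
    exact ⟨v, Finset.mem_compl.2 hvS, hve⟩
  have := S.card_add_card_compl
  omega

lemma alphaNum_add_muNum_le (H : SimpleGraph U) : alphaNum H + muNum H ≤ Fintype.card U := by
  obtain ⟨S, hS, hSc⟩ := exists_isMaxStable H
  obtain ⟨M, hM, hMc⟩ := exists_isMatching_card_eq_muNum H
  rw [← hSc, ← hMc]
  exact hS.card_add_card_le hM

lemma konigEgervary_of_card_le (hS : IsStable H S) (hM : IsMatching H M)
    (h : Fintype.card U ≤ S.card + M.card) : KonigEgervary H :=
  (alphaNum_add_muNum_le H).antisymm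
    (h.trans (add_le_add hS.card_le_alphaNum hM.card_le_muNum))

lemma konigEgervary_of_isPerfectMatching (hM : IsPerfectMatching H M) (hS : IsStable H S)
    (h : ∀ e ∈ M, ∀ x ∈ e, ∀ y ∈ e, x ∉ S → y ∉ S → x = y) : KonigEgervary H := by
  refine konigEgervary_of_card_le hS hM.1 ?_
  have hSc : Sᶜ.card ≤ M.card :=
    Finset.card_le_card_of_forall_subsingleton (fun v e => v ∈ e) (fun v _ => hM.2 v)
      fun e he x hx y hy =>
        h e he x hx.2 y hy.2 (Finset.mem_compl.1 hx.1) (Finset.mem_compl.1 hy.1)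
  have := S.card_add_card_compl
  omega

lemma IsStable.exists_mem_of_card_le (hS : IsStable H S) (hM : IsMatching H M)
    (hcard : Fintype.card U ≤ S.card + M.card) {v : U} (hv : v ∉ S) : ∃ e ∈ M, v ∈ e := by
  by_contra! hvM
  have h : M.card ≤ (Sᶜ.erase v).card := hM.card_le_card_of_forall_exists_mem fun e he => by
    obtain ⟨w, hwe, hwS⟩ := hS.exists_mem_notMem (hM.1 e he)
    exact ⟨w, Finset.mem_erase.2 ⟨fun hwv => hvM e he (hwv ▸ hwe), Finset.mem_compl.2 hwS⟩, hwe⟩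
  rw [Finset.card_erase_of_mem (Finset.mem_compl.2 hv), Finset.card_compl] at h
  have := S.card_lt_univ_of_notMem hv
  omega

lemma IsStable.eq_of_mem_of_card_le (hS : IsStable H S) (hM : IsMatching H M)
    (hcard : Fintype.card U ≤ S.card + M.card) {e : Sym2 U} (he : e ∈ M) {x y : U}
    (hx : x ∈ e) (hy : y ∈ e) (hxS : x ∉ S) (hyS : y ∉ S) : x = y := by
  by_contra hxy
  have h : M.card ≤ (Sᶜ.erase y).card := hM.card_le_card_of_forall_exists_mem fun f hf => by
    by_cases hfe : f = e
    · exact ⟨x, Finset.mem_erase.2 ⟨hxy, Finset.mem_compl.2 hxS⟩, hfe ▸ hx⟩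
    obtain ⟨w, hwf, hwS⟩ := hS.exists_mem_notMem (hM.1 f hf)
    refine ⟨w, Finset.mem_erase.2 ⟨?_, Finset.mem_compl.2 hwS⟩, hwf⟩
    rintro rfl
    exact hfe (hM.eq_of_mem_of_mem hf he hwf hy)
  rw [Finset.card_erase_of_mem (Finset.mem_compl.2 hyS), Finset.card_compl] at h
  have := S.card_lt_univ_of_notMem hyS
  omega

end Matching

section Restrict

variable {U : Type*} {H : SimpleGraph U}

noncomputable def restrictMatching (M : Finset (Sym2 U)) (W : Set U) : Finset (Sym2 W) :=
  M.preimage (Sym2.map (↑)) (Sym2.map.injective Subtype.val_injective).injOn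

variable {M : Finset (Sym2 U)} {W : Set U}

lemma mem_restrictMatching {e : Sym2 W} : e ∈ restrictMatching M W ↔ e.map (↑) ∈ M :=
  Finset.mem_preimage

lemma IsMatching.restrict (hM : IsMatching H M) (W : Set U) :
    IsMatching (H.induce W) (restrictMatching M W) := by
  refine ⟨fun e he => ?_, fun e he f hf hef v hve hvf => ?_⟩
  · induction e using Sym2.ind with
    | _ a b => exact hM.1 _ (mem_restrictMatching.1 he)
  · refine hM.2 _ (mem_restrictMatching.1 he) _ (mem_restrictMatching.1 hf)
      (fun h => hef (Sym2.map.injective Subtype.val_injective h)) v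
      (Sym2.mem_map.2 ⟨v, hve, rfl⟩) (Sym2.mem_map.2 ⟨v, hvf, rfl⟩)

lemma IsMatching.isPerfectMatching_restrict (hM : IsMatching H M)
    (h : ∀ v ∈ W, ∃ w ∈ W, s(v, w) ∈ M) :
    IsPerfectMatching (H.induce W) (restrictMatching M W) := by
  refine ⟨hM.restrict W, fun v => ?_⟩
  obtain ⟨w, hw, hvw⟩ := h v v.2
  exact ⟨s(v, ⟨w, hw⟩), mem_restrictMatching.2 hvw, Sym2.mem_mk_left _ _⟩

end Restrict

lemma mem_closedNbhd {G : SimpleGraph V} {A : Set V} {v : V} :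
    v ∈ closedNbhd G A ↔ v ∈ A ∨ ∃ a ∈ A, G.Adj a v :=
  Iff.rfl

lemma KonigEgervary.exists_partner_notMem_closedNbhd_core [Fintype V] {G : SimpleGraph V}
    (hG : KonigEgervary G) {M : Finset (Sym2 V)} (hM : IsMatching G M) (hMc : M.card = muNum G)
    {v : V} (hv : v ∉ closedNbhd G (core G)) : ∃ w ∉ closedNbhd G (core G), s(v, w) ∈ M := by
  simp only [mem_closedNbhd, not_or, not_exists, not_and] at hv
  obtain ⟨hvcore, hvnbhd⟩ := hv
  obtain ⟨T, hT, hvT⟩ : ∃ T, IsMaxStable G T ∧ v ∉ T := by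
    simpa [core] using hvcore
  have hcard : Fintype.card V ≤ T.card + M.card := by rw [hT.2, hMc, hG]
  obtain ⟨e, he, hve⟩ := hT.1.exists_mem_of_card_le hM hcard hvT
  set w := Sym2.Mem.other hve
  have hvw : s(v, w) = e := Sym2.other_spec hve
  have hadj : G.Adj v w := hM.1 _ (hvw ▸ he)
  have hwT : w ∈ T := by
    by_contra hwT
    exact hadj.ne <|
      hT.1.eq_of_mem_of_card_le hM hcard he hve (hvw ▸ Sym2.mem_mk_right v w) hvT hwT
  refine ⟨w, ?_, hvw ▸ he⟩
  rintro (hwcore | ⟨c, hc, hcw⟩)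
  · exact hvnbhd w hwcore hadj.symm
  · exact hT.1 (hc T hT) hwT hcw

/-- If `G` is a König-Egerváry graph and `G₀ = G - N[core(G)]` is the subgraph
induced on the vertices outside the closed neighborhood of `core(G)`, then `G₀`
has a perfect matching and is also a König-Egerváry graph. -/
theorem stmt_9 {V : Type*} [Fintype V] (G : SimpleGraph V)
    (hG : KonigEgervary G) (W : Set V) (hW : W = (closedNbhd G (core G))ᶜ) :
    (∃ M : Finset (Sym2 ↥W), IsPerfectMatching (G.induce W) M) ∧
      KonigEgervary (G.induce W) := by
  obtain ⟨S, hS⟩ := exists_isMaxStable G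
  obtain ⟨M, hM, hMc⟩ := exists_isMatching_card_eq_muNum G
  have hcard : Fintype.card V ≤ S.card + M.card := by rw [hS.2, hMc, hG]
  have hperf := hM.isPerfectMatching_restrict (W := W) fun v hv => by
    subst hW
    exact hG.exists_partner_notMem_closedNbhd_core hM hMc hv
  have hS₀ : IsStable (G.induce W) (S.subtype (· ∈ W)) :=
    fun x hx y hy => hS.1 (Finset.mem_subtype.1 hx) (Finset.mem_subtype.1 hy)
  refine ⟨⟨_, hperf⟩, konigEgervary_of_isPerfectMatching hperf hS₀ ?_⟩
  intro e he x hx y hy hxS hyS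
  exact Subtype.ext <| hS.1.eq_of_mem_of_card_le hM hcard (mem_restrictMatching.1 he)
    (Sym2.mem_map.2 ⟨x, hx, rfl⟩) (Sym2.mem_map.2 ⟨y, hy, rfl⟩)
    (mt Finset.mem_subtype.2 hxS) (mt Finset.mem_subtype.2 hyS)

end KEG
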